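/- Let G be a nontrivial finitely generated abelian group. Then there is no surjective group homomorphism from G onto G × G. -/

import Mathlib

/-! Finitely generated abelian groups are Noetherian `ℤ`-modules, so they are Hopfian: every
surjective endomorphism is injective. If `f : G →* G × H` were onto with `H` nontrivial, then
`fst ∘ f` would be a surjective endomorphism of `G`, hence injective; but a preimage of `(1, h)`
with `h ≠ 1` lies in its kernel without being `1`. -/

theorem MonoidHom.injective_of_surjective_of_fg {G : Type*} [CommGroup G] [Group.FG G]
    (f : G →* G) (hf : Function.Surjective f) : Function.Injective f :=
  have : Module.Finite ℤ (Additive G) := Module.Finite.iff_addGroup_fg.mpr inferInstance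
  IsNoetherian.injective_of_surjective_endomorphism f.toAdditive.toIntLinearMap hf

theorem MonoidHom.not_surjective_to_prod_of_fg {G H : Type*} [CommGroup G] [Group.FG G]
    [MulOneClass H] [Nontrivial H] (f : G →* G × H) : ¬ Function.Surjective f := by
  intro hf
  obtain ⟨h, hh⟩ := exists_ne (1 : H)
  obtain ⟨x, hx⟩ := hf (1, h)
  have hinj := ((MonoidHom.fst G H).comp f).injective_of_surjective_of_fg
    (Prod.fst_surjective.comp hf)
  have hx1 : x = 1 := hinj (by simp [hx])
  exact hh (by simpa [hx1] using congrArg Prod.snd hx.symm)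

/-- A nontrivial finitely generated abelian group admits no surjective
group homomorphism onto its square `G × G`. -/
theorem no_surjection_onto_square_of_fg_abelian
    (G : Type*) [CommGroup G] [Group.FG G] [Nontrivial G] :
    ¬ ∃ f : G →* G × G, Function.Surjective f :=
  fun ⟨f, hf⟩ => f.not_surjective_to_prod_of_fg hf
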